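/- arXiv:2507.16871 — 2 statements merged into one kernel-verified Lean document; each statement's English description precedes it below -/
import Mathlib

section
/- Let n be a natural number, a ∈ ℝ, A ∈ ℝⁿ, and let h : ℝ × ℝⁿ → ℝ be a differentiable function such that for all (y₀, y) ∈ ℝ × ℝⁿ: ∂h/∂y₀ (y₀,y) = a + Σᵢ Aᵢ·yᵢ − h(y₀,y), and ∂h/∂yᵢ (y₀,y) = Aᵢ for each 1 ≤ i ≤ n. Then there exists a constant C ∈ ℝ such that h(y₀, y) = C·e^{−y₀} + a + Σᵢ Aᵢ·yᵢ for all (y₀, y). -/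
/-! For fixed `y`, the map `t ↦ h (t, y)` solves the linear ODE `f' = c - f` with
`c = a + ∑ Aᵢ yᵢ`; the integrating factor `eᵗ` makes `(f - c) eᵗ` constant, so
`f t = (f 0 - c) e⁻ᵗ + c`. The slice `y ↦ h (0, y)` has the constant derivative `∑ Aᵢ yᵢ`,
hence is affine, and then `f 0 - c = h (0, 0) - a` does not depend on `y`. -/

open Real

theorem eq_exp_neg_mul_add_of_hasDerivAt {f : ℝ → ℝ} {c : ℝ}
    (hf : ∀ s, HasDerivAt f (c - f s) s) (t : ℝ) :
    f t = (f 0 - c) * exp (-t) + c := by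
  have hconst : ∀ s, HasDerivAt (fun s ↦ (f s - c) * exp s) 0 s := fun s ↦
    (((hf s).sub_const c).mul (hasDerivAt_exp s)).congr_deriv (by ring)
  have key := is_const_of_deriv_eq_zero (fun s ↦ (hconst s).differentiableAt)
    (fun s ↦ (hconst s).deriv) t 0
  rw [exp_zero, mul_one] at key
  rw [← key, mul_assoc, ← exp_add, add_neg_cancel, exp_zero]
  ring

theorem eq_add_of_forall_hasFDerivAt {𝕜 E F : Type*} [NontriviallyNormedField 𝕜]
    [IsRCLikeNormedField 𝕜] [NormedAddCommGroup E] [NormedSpace 𝕜 E] [NormedAddCommGroup F]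
    [NormedSpace 𝕜 F] {g : E → F} {L : E →L[𝕜] F} (hg : ∀ y, HasFDerivAt g L y) (y : E) :
    g y = g 0 + L y := by
  have hzero : ∀ y, HasFDerivAt (fun y ↦ g y - L y) 0 y := fun y ↦
    ((hg y).sub L.hasFDerivAt).congr_fderiv (sub_self L)
  have key := is_const_of_fderiv_eq_zero (fun y ↦ (hzero y).differentiableAt)
    (fun y ↦ (hzero y).fderiv) y 0
  rw [map_zero, sub_zero, sub_eq_iff_eq_add'] at key
  rw [key, add_comm]

theorem ContinuousLinearMap.eq_sum_smul_proj {𝕜 ι : Type*} [NormedField 𝕜] [Fintype ι]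
    [DecidableEq ι] (L : (ι → 𝕜) →L[𝕜] 𝕜) : L = ∑ i, L (Pi.single i 1) • proj i := by
  ext v
  conv_lhs => rw [← Finset.univ_sum_single v]
  simp only [map_sum, sum_apply, smul_apply, proj_apply, smul_eq_mul]
  refine Finset.sum_congr rfl fun i _ ↦ ?_
  rw [← mul_one (v i), ← smul_eq_mul, Pi.single_smul', map_smul, smul_eq_mul, smul_eq_mul,
    mul_one, mul_comm]

theorem rank_one_maurer_cartan_pde_solution
    (n : ℕ) (a : ℝ) (A : Fin n → ℝ)
    (h : ℝ × (Fin n → ℝ) → ℝ)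
    (hdiff : Differentiable ℝ h)
    (hd0 : ∀ p : ℝ × (Fin n → ℝ),
      fderiv ℝ h p (1, 0) = a + (∑ i, A i * p.2 i) - h p)
    (hdi : ∀ p : ℝ × (Fin n → ℝ), ∀ i : Fin n,
      fderiv ℝ h p (0, Pi.single i 1) = A i) :
    ∃ C : ℝ, ∀ p : ℝ × (Fin n → ℝ),
      h p = C * Real.exp (-p.1) + a + ∑ i, A i * p.2 i := by
  have hode : ∀ y t, h (t, y) = (h (0, y) - (a + ∑ i, A i * y i)) * exp (-t)
      + (a + ∑ i, A i * y i) := fun y ↦ eq_exp_neg_mul_add_of_hasDerivAt fun s ↦ by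
    have hs := (hdiff (s, y)).hasFDerivAt.comp_hasDerivAt s
      ((hasDerivAt_id s).prodMk (hasDerivAt_const s y))
    rwa [hd0] at hs
  have haff : ∀ y, h (0, y) = h (0, 0) + ∑ i, A i * y i := by
    have hslice : ∀ y, HasFDerivAt (fun y ↦ h (0, y)) (∑ i, A i • ContinuousLinearMap.proj i) y :=
      fun y ↦ by
      have hy := (hdiff (0, y)).hasFDerivAt.comp y (hasFDerivAt_prodMk_right (0 : ℝ) y)
      rw [ContinuousLinearMap.eq_sum_smul_proj (fderiv ℝ h (0, y) ∘L _)] at hy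
      simp only [ContinuousLinearMap.comp_apply, ContinuousLinearMap.inr_apply, hdi] at hy
      exact hy
    simpa using eq_add_of_forall_hasFDerivAt hslice
  refine ⟨h (0, 0) - a, fun ⟨t, y⟩ ↦ ?_⟩
  rw [hode y t, haff y]
  ring
end

section
/- Let E₍ᵢ,ⱼ₎ denote matrix units of the 4×4 real matrices (indices 0,1,2,3). Define t₁ = E₍₀,₀₎ − E₍₃,₃₎, t₂ = (E₍₀,₁₎ − E₍₁,₃₎)/√2, t₃ = (E₍₀,₂₎ − E₍₂,₃₎)/√2, and define T₁ = −E₍₀,₀₎ + E₍₁,₁₎, T₂ = −E₍₀,₀₎ + E₍₂,₂₎, T₃ = −E₍₀,₀₎ + E₍₃,₃₎, T₄ = E₍₀,₁₎, T₅ = E₍₁,₂₎, T₆ = E₍₂,₃₎, T₇ = E₍₀,₂₎, T₈ = E₍₁,₃₎, T₉ = E₍₀,₃₎. The matrices T₁,…,T₉ are linearly independent and span the space B of upper-triangular traceless real 4×4 matrices, which is closed under the bracket [X,Y] = XY − YX. For any α₁, α₂, α₃, α₄ ∈ ℝ, let φ : B → M₄(ℝ) be the unique linear map with φ(T₁) =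 −2t₁ + α₁t₂ + α₃t₃, φ(T₂) = φ(T₃) = −t₁ + (α₁/2)t₂ + (α₃/2)t₃, φ(T₄) = α₂t₂ + α₄t₃, and φ(T₅) = φ(T₆) = φ(T₇) = φ(T₈) = φ(T₉) = 0. Then φ([X,Y]) = [φ(X), φ(Y)] for all X, Y ∈ B. -/
open Matrix

/-- Matrix units of the `4 × 4` real matrices. -/
def E4 (i j : Fin 4) : Matrix (Fin 4) (Fin 4) ℝ := Matrix.single i j 1

/-- Generators of the solvable Lie algebra of `SO(1,3)/SO(3)`. -/
noncomputable def tGen : Fin 3 → Matrix (Fin 4) (Fin 4) ℝ :=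
  ![E4 0 0 - E4 3 3,
    (1 / Real.sqrt 2) • (E4 0 1 - E4 1 3),
    (1 / Real.sqrt 2) • (E4 0 2 - E4 2 3)]

/-- The paper's basis `T₁, …, T₉` of the Borel subalgebra of `sl(4, ℝ)`. -/
def TGen : Fin 9 → Matrix (Fin 4) (Fin 4) ℝ :=
  ![-E4 0 0 + E4 1 1,
    -E4 0 0 + E4 2 2,
    -E4 0 0 + E4 3 3,
    E4 0 1, E4 1 2, E4 2 3, E4 0 2, E4 1 3, E4 0 3]

/-- The set of upper-triangular traceless real `4 × 4` matrices (the Borel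
subalgebra of `sl(4, ℝ)`). -/
def borelSet : Set (Matrix (Fin 4) (Fin 4) ℝ) :=
  {X | X.BlockTriangular id ∧ X.trace = 0}


/-!
On `B`, the map `φ` only sees the root coordinate `(X₁₁ - X₀₀) / 2` and the entry `X₀₁`:
`φ X = ((X₁₁ - X₀₀) / 2) • A + X₀₁ • C` with `A = φ T₁` and `C = φ T₄`. Since `ad t₁` is the
identity on the abelian span of `t₂, t₃`, we get `[A, C] = -2 C`, so `[φ X, φ Y]` is the multiple
`-((X₁₁ - X₀₀) Y₀₁ - (Y₁₁ - Y₀₀) X₀₁) • C`. On the other side, the commutator of two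
upper-triangular matrices has zero diagonal and `(0, 1)` entry `(X₀₀ - X₁₁) Y₀₁ - (Y₀₀ - Y₁₁) X₀₁`,
so `φ [X, Y]` is the same multiple of `C`.
-/

section Commutator

variable {R A : Type*} [CommRing R] [Ring A] [Algebra R A]

theorem commutator_smul_add_smul_of_commutator_eq_smul {x y : A} {c : R}
    (h : x * y - y * x = c • y) (a b a' b' : R) :
    (a • x + b • y) * (a' • x + b' • y) - (a' • x + b' • y) * (a • x + b • y) =
      (c * (a * b' - a' * b)) • y := by
  have hxy : x * y = y * x + c • y := sub_eq_iff_eq_add'.mp h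
  simp only [add_mul, mul_add, smul_mul_smul_comm, hxy]
  module

theorem commutator_smul_add_smul_of_commutator_eq {x y z : A} (hxy : x * y - y * x = y)
    (hxz : x * z - z * x = z) (hyz : Commute y z) (p a b c d : R) :
    (p • x + a • y + b • z) * (c • y + d • z) - (c • y + d • z) * (p • x + a • y + b • z) =
      p • (c • y + d • z) := by
  have hxy' : x * y = y * x + y := sub_eq_iff_eq_add'.mp hxy
  have hxz' : x * z = z * x + z := sub_eq_iff_eq_add'.mp hxz
  simp only [add_mul, mul_add, smul_mul_smul_comm, hxy', hxz', hyz.eq]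
  module

end Commutator

namespace Matrix.BlockTriangular

theorem mul_apply_self {n R : Type*} [LinearOrder n] [Fintype n] [NonUnitalNonAssocSemiring R]
    {M N : Matrix n n R} (hM : M.BlockTriangular id) (hN : N.BlockTriangular id) (i : n) :
    (M * N) i i = M i i * N i i := by
  refine Finset.sum_eq_single i (fun k _ hki => ?_) (by simp)
  rcases lt_or_gt_of_ne hki with h | h
  · simp [hM h]
  · simp [hN h]

theorem commutator_apply_self {n R : Type*} [LinearOrder n] [Fintype n] [CommRing R]
    {M N : Matrix n n R} (hM : M.BlockTriangular id) (hN : N.BlockTriangular id) (i : n) :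
    (M * N - N * M) i i = 0 := by
  rw [sub_apply, hM.mul_apply_self hN, hN.mul_apply_self hM, mul_comm, sub_self]

theorem mul_apply_zero_one {n : ℕ} {R : Type*} [NonUnitalNonAssocSemiring R]
    {M N : Matrix (Fin (n + 2)) (Fin (n + 2)) R} (hN : N.BlockTriangular id) :
    (M * N) 0 1 = M 0 0 * N 0 1 + M 0 1 * N 1 1 := by
  have hN₁ : ∀ k : Fin n, N k.succ.succ 1 = 0 := fun k => hN (by simp [Fin.lt_def])
  rw [mul_apply, Fin.sum_univ_succ, Fin.sum_univ_succ]
  simp [hN₁]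

theorem commutator_apply_zero_one {n : ℕ} {R : Type*} [CommRing R]
    {M N : Matrix (Fin (n + 2)) (Fin (n + 2)) R} (hM : M.BlockTriangular id)
    (hN : N.BlockTriangular id) :
    (M * N - N * M) 0 1 = (M 0 0 - M 1 1) * N 0 1 - (N 0 0 - N 1 1) * M 0 1 := by
  rw [sub_apply, hN.mul_apply_zero_one, hM.mul_apply_zero_one]
  ring

end Matrix.BlockTriangular

theorem E4_mul_E4 (i j k l : Fin 4) : E4 i j * E4 k l = if j = k then E4 i l else 0 := by
  split_ifs with h
  · subst h
    simp [E4]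
  · exact single_mul_single_of_ne (c := 1) i j k h 1

theorem commutator_tGen_zero_one : tGen 0 * tGen 1 - tGen 1 * tGen 0 = tGen 1 := by
  simp [tGen, sub_mul, mul_sub, smul_sub, E4_mul_E4]

theorem commutator_tGen_zero_two : tGen 0 * tGen 2 - tGen 2 * tGen 0 = tGen 2 := by
  simp [tGen, sub_mul, mul_sub, smul_sub, E4_mul_E4]

theorem commute_tGen_one_two : Commute (tGen 1) (tGen 2) := by
  simp [Commute, SemiconjBy, tGen, sub_mul, mul_sub, E4_mul_E4]

theorem apply_zero_zero_of_mem_borelSet {X : Matrix (Fin 4) (Fin 4) ℝ} (hX : X ∈ borelSet) :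
    X 0 0 = -(X 1 1 + X 2 2 + X 3 3) := by
  have htr := hX.2
  simp only [trace, diag, Fin.sum_univ_four] at htr
  linarith

theorem commutator_mem_borelSet {X Y : Matrix (Fin 4) (Fin 4) ℝ} (hX : X ∈ borelSet)
    (hY : Y ∈ borelSet) : X * Y - Y * X ∈ borelSet :=
  ⟨(hX.1.mul hY.1).sub (hY.1.mul hX.1), by rw [trace_sub, trace_mul_comm, sub_self]⟩

theorem TGen_mem_borelSet (k : Fin 9) : TGen k ∈ borelSet := by
  have hE : ∀ {i j : Fin 4}, i ≤ j → (E4 i j).BlockTriangular id :=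
    fun h => blockTriangular_single h 1
  refine ⟨?_, ?_⟩
  · fin_cases k
    all_goals first
      | exact hE (by decide)
      | exact (hE (by decide)).neg.add (hE (by decide))
  · fin_cases k <;> simp [TGen, E4]

def borelSubmodule : Submodule ℝ (Matrix (Fin 4) (Fin 4) ℝ) :=
  Subalgebra.toSubmodule (blockTriangularSubalgebra ℝ ℝ id) ⊓
    LinearMap.ker (traceLinearMap (Fin 4) ℝ ℝ)

theorem coe_borelSubmodule : (borelSubmodule : Set (Matrix (Fin 4) (Fin 4) ℝ)) = borelSet :=
  rfl

/-- Coordinates in the basis `TGen`; they are only meaningful on `borelSet`, where the omitted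
entry `M 0 0` is fixed by the trace. -/
def borelCoords : Matrix (Fin 4) (Fin 4) ℝ →ₗ[ℝ] Fin 9 → ℝ where
  toFun M := ![M 1 1, M 2 2, M 3 3, M 0 1, M 1 2, M 2 3, M 0 2, M 1 3, M 0 3]
  map_add' M N := by funext k; fin_cases k <;> rfl
  map_smul' c M := by funext k; fin_cases k <;> rfl

theorem borelCoords_TGen (k : Fin 9) : borelCoords (TGen k) = Pi.single k 1 := by
  fin_cases k <;> funext i <;> fin_cases i <;> simp [borelCoords, TGen, E4]

theorem sum_borelCoords_smul_TGen {X : Matrix (Fin 4) (Fin 4) ℝ} (hX : X ∈ borelSet) :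
    ∑ k, borelCoords X k • TGen k = X := by
  have h00 := apply_zero_zero_of_mem_borelSet hX
  ext i j
  fin_cases i <;> fin_cases j <;> simp [Fin.sum_univ_succ, borelCoords, TGen, E4, h00] <;>
    first | exact Eq.symm (hX.1 (by decide)) | ring

theorem linearIndependent_TGen : LinearIndependent ℝ TGen := by
  apply LinearIndependent.of_comp borelCoords
  convert (Pi.basisFun ℝ (Fin 9)).linearIndependent
  ext1 k
  simp [borelCoords_TGen]

theorem span_TGen_eq_borelSet :
    (Submodule.span ℝ (Set.range TGen) : Set (Matrix (Fin 4) (Fin 4) ℝ)) = borelSet := by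
  refine Set.Subset.antisymm ?_ fun X hX => ?_
  · rw [← coe_borelSubmodule, SetLike.coe_subset_coe, Submodule.span_le, coe_borelSubmodule]
    exact Set.range_subset_iff.2 TGen_mem_borelSet
  · rw [← sum_borelCoords_smul_TGen hX]
    exact Submodule.sum_mem _ fun k _ => Submodule.smul_mem _ _ (Submodule.subset_span ⟨k, rfl⟩)

theorem map_eq_of_mem_borelSet {M : Type*} [AddCommGroup M] [Module ℝ M]
    (φ : Matrix (Fin 4) (Fin 4) ℝ →ₗ[ℝ] M)
    (h1 : φ (TGen 1) = (2⁻¹ : ℝ) • φ (TGen 0)) (h2 : φ (TGen 2) = (2⁻¹ : ℝ) • φ (TGen 0))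
    (h4 : φ (TGen 4) = 0) (h5 : φ (TGen 5) = 0) (h6 : φ (TGen 6) = 0) (h7 : φ (TGen 7) = 0)
    (h8 : φ (TGen 8) = 0) {X : Matrix (Fin 4) (Fin 4) ℝ} (hX : X ∈ borelSet) :
    φ X = ((X 1 1 - X 0 0) / 2) • φ (TGen 0) + X 0 1 • φ (TGen 3) := by
  calc φ X = ∑ k, borelCoords X k • φ (TGen k) := by
        conv_lhs => rw [← sum_borelCoords_smul_TGen hX]
        simp only [map_sum, map_smul]
    _ = X 1 1 • φ (TGen 0) + X 2 2 • φ (TGen 1) + X 3 3 • φ (TGen 2) + X 0 1 • φ (TGen 3) +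
          X 1 2 • φ (TGen 4) + X 2 3 • φ (TGen 5) + X 0 2 • φ (TGen 6) + X 1 3 • φ (TGen 7) +
          X 0 3 • φ (TGen 8) := by
        simp [Fin.sum_univ_succ, borelCoords, add_assoc]
    _ = ((X 1 1 - X 0 0) / 2) • φ (TGen 0) + X 0 1 • φ (TGen 3) := by
        rw [h1, h2, h4, h5, h6, h7, h8, apply_zero_zero_of_mem_borelSet hX]
        module

theorem class_switching_restriction_homomorphism :
    LinearIndependent ℝ TGen ∧
    (Submodule.span ℝ (Set.range TGen) : Set (Matrix (Fin 4) (Fin 4) ℝ)) = borelSet ∧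
    (∀ X ∈ borelSet, ∀ Y ∈ borelSet, X * Y - Y * X ∈ borelSet) ∧
    (∀ α₁ α₂ α₃ α₄ : ℝ,
      ∀ φ : Matrix (Fin 4) (Fin 4) ℝ →ₗ[ℝ] Matrix (Fin 4) (Fin 4) ℝ,
      φ (TGen 0) = (-2 : ℝ) • tGen 0 + α₁ • tGen 1 + α₃ • tGen 2 →
      φ (TGen 1) = -(tGen 0) + (α₁/2) • tGen 1 + (α₃/2) • tGen 2 →
      φ (TGen 2) = -(tGen 0) + (α₁/2) • tGen 1 + (α₃/2) • tGen 2 →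
      φ (TGen 3) = α₂ • tGen 1 + α₄ • tGen 2 →
      φ (TGen 4) = 0 → φ (TGen 5) = 0 → φ (TGen 6) = 0 →
      φ (TGen 7) = 0 → φ (TGen 8) = 0 →
      ∀ X ∈ borelSet, ∀ Y ∈ borelSet,
        φ (X * Y - Y * X) = φ X * φ Y - φ Y * φ X) := by
  refine ⟨linearIndependent_TGen, span_TGen_eq_borelSet,
    fun X hX Y hY => commutator_mem_borelSet hX hY, ?_⟩
  intro α₁ α₂ α₃ α₄ φ h0 h1 h2 h3 h4 h5 h6 h7 h8 X hX Y hY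
  have h1' : φ (TGen 1) = (2⁻¹ : ℝ) • φ (TGen 0) := by rw [h1, h0]; module
  have h2' : φ (TGen 2) = (2⁻¹ : ℝ) • φ (TGen 0) := by rw [h2, h0]; module
  have hφ := fun Z (hZ : Z ∈ borelSet) => map_eq_of_mem_borelSet φ h1' h2' h4 h5 h6 h7 h8 hZ
  have hAC : φ (TGen 0) * φ (TGen 3) - φ (TGen 3) * φ (TGen 0) = (-2 : ℝ) • φ (TGen 3) := by
    rw [h0, h3]
    exact commutator_smul_add_smul_of_commutator_eq commutator_tGen_zero_one
      commutator_tGen_zero_two commute_tGen_one_two _ _ _ _ _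
  rw [hφ _ (commutator_mem_borelSet hX hY), hφ X hX, hφ Y hY,
    commutator_smul_add_smul_of_commutator_eq_smul hAC, hX.1.commutator_apply_self hY.1,
    hX.1.commutator_apply_self hY.1, hX.1.commutator_apply_zero_one hY.1]
  module
end
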